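/- The inverse connection formula: H_n(x|q) = Σ_{k=0}^{⌊n/2⌋} (−1)^k (q;q)_n · q^{k(2k−n−1)} / [(q²;q²)_k (q;q)_{n−2k}] · Ψ_{n−2k}(x) for all n ≥ 0. -/

import Mathlib

noncomputable section

def qPoch (a p : ℝ) (n : ℕ) : ℝ := ∏ j ∈ Finset.range n, (1 - a * p ^ j)

def qHermite (q : ℝ) : ℕ → ℝ → ℝ
  | 0 => fun _ => 1
  | 1 => fun x => 2 * x
  | (n + 2) => fun x => 2 * x * qHermite q (n + 1) x - (1 - q ^ (n + 1)) * qHermite q n x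

def Psi (q : ℝ) : ℕ → ℝ → ℝ
  | 0 => fun _ => 1
  | 1 => fun x => 2 * x
  | (n + 2) => fun x =>
      4 * x ^ 2 * Psi q n x - (1 - q ^ (n + 1)) * (1 - q ^ (-(n + 1) : ℤ)) * Psi q n x


/-! With `y = 4x² - 2`, the recurrence of `Ψ` reads `Ψ_{m+2} = (y + q^{m+1} + q^{-m-1}) Ψ_m`, and
eliminating `H_{n+3}`, `H_{n+1}` from the three-term recurrence gives the two-step recurrence
`H_{n+4} = (y + q^{n+3} + q^{n+2}) H_{n+2} - (1 - q^{n+2})(1 - q^{n+1}) H_n`.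
So it suffices to check that the right-hand side obeys the same recurrence and the same values for
`n ≤ 3`. Multiplying by `y` moves `Ψ_m` to `Ψ_{m+2}`, and comparing coefficients of `Ψ_{n-2k}` turns the
recurrence into a rational identity in `a = q^{n-2k+1}`, `q` and `q^{2k}`. -/

theorem qPoch_zero (a p : ℝ) : qPoch a p 0 = 1 := Finset.prod_range_zero _

theorem qPoch_succ (a p : ℝ) (n : ℕ) : qPoch a p (n + 1) = qPoch a p n * (1 - a * p ^ n) :=
  Finset.prod_range_succ _ _

theorem qPoch_add (a p : ℝ) (m n : ℕ) :
    qPoch a p (m + n) = qPoch a p m * qPoch (a * p ^ m) p n := by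
  simp only [qPoch, Finset.prod_range_add, pow_add, mul_assoc]

theorem qPoch_succ' (a p : ℝ) (n : ℕ) : qPoch a p (n + 1) = (1 - a) * qPoch (a * p) p n := by
  rw [add_comm, qPoch_add, pow_one, show qPoch a p 1 = 1 - a by simp [qPoch]]

theorem qPoch_pos {a p : ℝ} (ha0 : 0 ≤ a) (ha1 : a < 1) (hp0 : 0 ≤ p) (hp1 : p ≤ 1) (n : ℕ) :
    0 < qPoch a p n :=
  Finset.prod_pos fun j _ => by nlinarith [pow_le_one₀ hp0 hp1 (n := j)]

theorem qPoch_zpow_eq_zero {q : ℝ} (hq : q ≠ 0) {m : ℤ} {n : ℕ} (hm : m ≤ 0) (hn : -m < n) :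
    qPoch (q ^ m) q n = 0 := by
  refine Finset.prod_eq_zero (i := (-m).toNat) (Finset.mem_range.2 (by omega)) ?_
  rw [← zpow_natCast, ← zpow_add₀ hq, Int.toNat_of_nonneg (by omega)]
  simp

/-- With `a = q^{n-2k+1}` this is the coefficient of `Ψ_{n-2k}` in `H_n`: indeed
`(q;q)_n / (q;q)_{n-2k} = (a;q)_{2k}` and `q^{k(2k-n-1)} = a^{-k}`. -/
def connCoeff (q a : ℝ) (k : ℕ) : ℝ :=
  (-1) ^ k * qPoch a q (2 * k) / (a ^ k * qPoch (q ^ 2) (q ^ 2) k)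

theorem connCoeff_zero (q a : ℝ) : connCoeff q a 0 = 1 := by
  simp [connCoeff, qPoch_zero]

theorem connCoeff_mul_sq_one {q b : ℝ} (hq : q ≠ 0) (hb : b ≠ 0) (hq2 : 1 - q ^ 2 ≠ 0) :
    connCoeff q (b * q ^ 2) 1 = connCoeff q b 1 + b * q - (b * q ^ 2)⁻¹ := by
  simp only [connCoeff, qPoch, Finset.prod_range_succ, Finset.prod_range_zero]
  field_simp
  ring

theorem connCoeff_add_two {q a : ℝ} (hq : q ≠ 0) (ha : a ≠ 0) {k : ℕ}
    (hk : qPoch (q ^ 2) (q ^ 2) (k + 2) ≠ 0) :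
    connCoeff q a (k + 2) = connCoeff q (a / q ^ 2) (k + 2)
      + (a * q ^ (2 * k) * (q ^ 2 + q) - (a + a⁻¹)) * connCoeff q a (k + 1)
      - (1 - a * q ^ (2 * k) * q) * (1 - a * q ^ (2 * k)) * connCoeff q a k := by
  have hE : qPoch (q ^ 2) (q ^ 2) (k + 2) = qPoch (q ^ 2) (q ^ 2) k
      * (1 - q ^ 2 * (q ^ 2) ^ k) * (1 - q ^ 2 * (q ^ 2) ^ (k + 1)) := by
    rw [qPoch_succ, qPoch_succ]
  have hP : qPoch a q (2 * (k + 2)) = qPoch a q (2 * k) * (1 - a * q ^ (2 * k))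
      * (1 - a * q ^ (2 * k + 1)) * (1 - a * q ^ (2 * k + 2)) * (1 - a * q ^ (2 * k + 3)) := by
    rw [show 2 * (k + 2) = 2 * k + 1 + 1 + 1 + 1 by ring]
    simp only [qPoch_succ]
  have hP' : qPoch (a / q ^ 2) q (2 * (k + 2)) = (1 - a / q ^ 2) * (1 - a / q)
      * qPoch a q (2 * k) * (1 - a * q ^ (2 * k)) * (1 - a * q ^ (2 * k + 1)) := by
    rw [show 2 * (k + 2) = 2 * k + 1 + 1 + 1 + 1 by ring, qPoch_succ', qPoch_succ',
      show a / q ^ 2 * q * q = a by field_simp, show a / q ^ 2 * q = a / q by field_simp]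
    simp only [qPoch_succ]
    ring
  have hP1 : qPoch a q (2 * (k + 1)) = qPoch a q (2 * k) * (1 - a * q ^ (2 * k))
      * (1 - a * q ^ (2 * k + 1)) := by
    rw [show 2 * (k + 1) = 2 * k + 1 + 1 by ring]
    simp only [qPoch_succ]
  rw [hE] at hk
  have h1 : qPoch (q ^ 2) (q ^ 2) k ≠ 0 := left_ne_zero_of_mul (left_ne_zero_of_mul hk)
  have h2 : 1 - q ^ 2 * (q ^ 2) ^ k ≠ 0 := right_ne_zero_of_mul (left_ne_zero_of_mul hk)
  have h3 : 1 - q ^ 2 * (q ^ 2) ^ (k + 1) ≠ 0 := right_ne_zero_of_mul hk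
  simp only [connCoeff, hP, hP', hP1, hE, qPoch_succ (q ^ 2) (q ^ 2) k, div_pow]
  field_simp
  ring

/-- For `2k > n` the factor `(q^{n-2k+1};q)_{2k}` contains `1 - q^0`, so the coefficient vanishes;
this absorbs the boundary terms of the coefficient recurrence. -/
def psiCoeff (q : ℝ) (n k : ℕ) : ℝ := connCoeff q (q ^ ((n : ℤ) - 2 * k + 1)) k

theorem psiCoeff_zero (q : ℝ) (n : ℕ) : psiCoeff q n 0 = 1 := connCoeff_zero _ _

theorem psiCoeff_eq_zero {q : ℝ} (hq : q ≠ 0) {n k : ℕ} (h : n < 2 * k) : psiCoeff q n k = 0 := by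
  rw [psiCoeff, connCoeff, qPoch_zpow_eq_zero hq (by omega) (by omega), mul_zero, zero_div]

theorem psiCoeff_eq {q : ℝ} (hq : q ≠ 0) {n k : ℕ} (h : 2 * k ≤ n) (hP : qPoch q q (n - 2 * k) ≠ 0) :
    psiCoeff q n k = (-1) ^ k * qPoch q q n * q ^ ((k : ℤ) * (2 * (k : ℤ) - n - 1)) /
      (qPoch (q ^ 2) (q ^ 2) k * qPoch q q (n - 2 * k)) := by
  obtain ⟨m, rfl⟩ := Nat.exists_eq_add_of_le' h
  have ha : q ^ ((↑(m + 2 * k) : ℤ) - 2 * ↑k + 1) = q * q ^ m := by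
    rw [← pow_succ', ← zpow_natCast]; push_cast; ring_nf
  have hpow : q ^ ((k : ℤ) * (2 * (k : ℤ) - ↑(m + 2 * k) - 1)) = ((q * q ^ m) ^ k)⁻¹ := by
    rw [← pow_succ', ← pow_mul, ← zpow_natCast, ← zpow_neg]; push_cast; ring_nf
  rw [Nat.add_sub_cancel] at hP ⊢
  rw [psiCoeff, ha, hpow, qPoch_add, connCoeff]
  field_simp

theorem psiCoeff_add_four_one {q : ℝ} (hq : q ≠ 0) (hq2 : 1 - q ^ 2 ≠ 0) (n : ℕ) :
    psiCoeff q (n + 4) 1 = psiCoeff q (n + 2) 1 + q ^ (n + 2) - (q ^ (n + 3))⁻¹ := by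
  have h4 : q ^ ((↑(n + 4) : ℤ) - 2 * ↑(1 : ℕ) + 1) = q ^ (n + 1) * q ^ 2 := by
    rw [← pow_add, ← zpow_natCast]; push_cast; ring_nf
  have h2 : q ^ ((↑(n + 2) : ℤ) - 2 * ↑(1 : ℕ) + 1) = q ^ (n + 1) := by
    rw [← zpow_natCast]; push_cast; ring_nf
  rw [psiCoeff, psiCoeff, h4, h2, connCoeff_mul_sq_one hq (pow_ne_zero _ hq) hq2]
  ring

theorem psiCoeff_add_two_one (q : ℝ) (m : ℕ) :
    psiCoeff q (m + 2) 1 = -((1 - q ^ (m + 1)) * (1 - q ^ (m + 2))) / (q ^ (m + 1) * (1 - q ^ 2)) := by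
  have h : q ^ ((↑(m + 2) : ℤ) - 2 * ↑(1 : ℕ) + 1) = q ^ (m + 1) := by
    rw [← zpow_natCast]; push_cast; ring_nf
  simp only [psiCoeff, h, connCoeff, qPoch, Finset.prod_range_succ, Finset.prod_range_zero]
  ring

theorem psiCoeff_add_four_add_two {q : ℝ} (hq : q ≠ 0) {n k : ℕ}
    (hE : qPoch (q ^ 2) (q ^ 2) (k + 2) ≠ 0) (h : 2 * k ≤ n) :
    psiCoeff q (n + 4) (k + 2) = psiCoeff q (n + 2) (k + 2)
      + (q ^ (n + 3) + q ^ (n + 2) - (q ^ (n - 2 * k + 1) + (q ^ (n - 2 * k + 1))⁻¹))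
        * psiCoeff q (n + 2) (k + 1)
      - (1 - q ^ (n + 2)) * (1 - q ^ (n + 1)) * psiCoeff q n k := by
  obtain ⟨m, rfl⟩ := Nat.exists_eq_add_of_le' h
  have e1 : q ^ ((↑(m + 2 * k + 4) : ℤ) - 2 * ↑(k + 2) + 1) = q ^ (m + 1) := by
    rw [← zpow_natCast]; push_cast; ring_nf
  have e2 : q ^ ((↑(m + 2 * k + 2) : ℤ) - 2 * ↑(k + 2) + 1) = q ^ (m + 1) / q ^ 2 := by
    rw [← zpow_natCast, ← zpow_natCast, ← zpow_sub₀ hq]; push_cast; ring_nf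
  have e3 : q ^ ((↑(m + 2 * k + 2) : ℤ) - 2 * ↑(k + 1) + 1) = q ^ (m + 1) := by
    rw [← zpow_natCast]; push_cast; ring_nf
  have e4 : q ^ ((↑(m + 2 * k) : ℤ) - 2 * ↑k + 1) = q ^ (m + 1) := by
    rw [← zpow_natCast]; push_cast; ring_nf
  rw [psiCoeff, psiCoeff, psiCoeff, psiCoeff, e1, e2, e3, e4,
    connCoeff_add_two hq (pow_ne_zero _ hq) hE, Nat.add_sub_cancel]
  ring

theorem Psi_add_two {q : ℝ} (hq : q ≠ 0) (m : ℕ) (x : ℝ) :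
    Psi q (m + 2) x = (4 * x ^ 2 - 2 + q ^ (m + 1) + (q ^ (m + 1))⁻¹) * Psi q m x := by
  rw [Psi, show (-(m + 1) : ℤ) = -((m + 1 : ℕ) : ℤ) by push_cast; ring, zpow_neg, zpow_natCast]
  field_simp
  ring

theorem qHermite_add_four (q : ℝ) (n : ℕ) (x : ℝ) :
    qHermite q (n + 4) x = (4 * x ^ 2 - 2 + q ^ (n + 3) + q ^ (n + 2)) * qHermite q (n + 2) x
      - (1 - q ^ (n + 2)) * (1 - q ^ (n + 1)) * qHermite q n x := by
  simp only [qHermite]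
  ring

def psiSum (q : ℝ) (n : ℕ) (x : ℝ) : ℝ :=
  ∑ k ∈ Finset.range (n / 2 + 1), psiCoeff q n k * Psi q (n - 2 * k) x

theorem psiSum_add_two_eq (q : ℝ) (n : ℕ) (x : ℝ) :
    psiSum q (n + 2) x = Psi q (n + 2) x
      + ∑ k ∈ Finset.range (n / 2 + 1), psiCoeff q (n + 2) (k + 1) * Psi q (n - 2 * k) x := by
  rw [psiSum, show (n + 2) / 2 + 1 = n / 2 + 1 + 1 by omega, Finset.sum_range_succ', psiCoeff_zero,
    one_mul, Nat.mul_zero, Nat.sub_zero, add_comm]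
  refine congrArg _ (Finset.sum_congr rfl fun k _ => ?_)
  rw [show n + 2 - 2 * (k + 1) = n - 2 * k by omega]

theorem mul_psiSum_eq {q : ℝ} (hq : q ≠ 0) (n : ℕ) (x : ℝ) :
    (4 * x ^ 2 - 2) * psiSum q n x
      = ∑ k ∈ Finset.range (n / 2 + 2), psiCoeff q n k * Psi q (n + 2 - 2 * k) x
        - ∑ k ∈ Finset.range (n / 2 + 1),
            psiCoeff q n k * (q ^ (n - 2 * k + 1) + (q ^ (n - 2 * k + 1))⁻¹) * Psi q (n - 2 * k) x := by
  rw [Finset.sum_range_succ, psiCoeff_eq_zero hq (by omega), zero_mul, add_zero, psiSum,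
    Finset.mul_sum, ← Finset.sum_sub_distrib]
  refine Finset.sum_congr rfl fun k hk => ?_
  have hk : 2 * k ≤ n := by have := Finset.mem_range.1 hk; omega
  rw [show n + 2 - 2 * k = n - 2 * k + 2 by omega, Psi_add_two hq]
  ring

theorem psiSum_add_four {q : ℝ} (hq : q ≠ 0) (hE : ∀ k, qPoch (q ^ 2) (q ^ 2) k ≠ 0)
    (n : ℕ) (x : ℝ) :
    psiSum q (n + 4) x = (4 * x ^ 2 - 2 + q ^ (n + 3) + q ^ (n + 2)) * psiSum q (n + 2) x
      - (1 - q ^ (n + 2)) * (1 - q ^ (n + 1)) * psiSum q n x := by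
  set N := n / 2 + 1
  have hidx : ∀ k, n + 2 + 2 - 2 * (k + 1 + 1) = n - 2 * k := fun k => by omega
  have hidx' : ∀ k, n + 2 - 2 * (k + 1) = n - 2 * k := fun k => by omega
  have hS := psiSum_add_two_eq q n x
  have hT : psiSum q (n + 4) x = Psi q (n + 4) x + psiCoeff q (n + 4) 1 * Psi q (n + 2) x
      + ∑ k ∈ Finset.range N, psiCoeff q (n + 4) (k + 2) * Psi q (n - 2 * k) x := by
    rw [psiSum_add_two_eq q (n + 2), show (n + 2) / 2 + 1 = N + 1 by omega, Finset.sum_range_succ']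
    simp only [hidx', zero_add, Nat.mul_zero, Nat.sub_zero]
    ring
  have hY : (4 * x ^ 2 - 2) * psiSum q (n + 2) x = Psi q (n + 4) x
      + psiCoeff q (n + 2) 1 * Psi q (n + 2) x
      + ∑ k ∈ Finset.range N, psiCoeff q (n + 2) (k + 2) * Psi q (n - 2 * k) x
      - (q ^ (n + 3) + (q ^ (n + 3))⁻¹) * Psi q (n + 2) x
      - ∑ k ∈ Finset.range N, psiCoeff q (n + 2) (k + 1)
          * (q ^ (n - 2 * k + 1) + (q ^ (n - 2 * k + 1))⁻¹) * Psi q (n - 2 * k) x := by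
    rw [mul_psiSum_eq hq, show (n + 2) / 2 + 2 = N + 1 + 1 by omega,
      show (n + 2) / 2 + 1 = N + 1 by omega, Finset.sum_range_succ' _ (N + 1),
      Finset.sum_range_succ' _ N, Finset.sum_range_succ' _ N]
    simp only [hidx, hidx', psiCoeff_zero, Nat.mul_zero, Nat.sub_zero, zero_add,
      show n + 2 + 2 - 2 * 1 = n + 2 from rfl]
    ring
  have hq2 : 1 - q ^ 2 ≠ 0 := by simpa [qPoch] using hE 1
  have hSum : ∑ k ∈ Finset.range N, psiCoeff q (n + 4) (k + 2) * Psi q (n - 2 * k) x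
      = ∑ k ∈ Finset.range N, psiCoeff q (n + 2) (k + 2) * Psi q (n - 2 * k) x
        - ∑ k ∈ Finset.range N, psiCoeff q (n + 2) (k + 1)
            * (q ^ (n - 2 * k + 1) + (q ^ (n - 2 * k + 1))⁻¹) * Psi q (n - 2 * k) x
        + (q ^ (n + 3) + q ^ (n + 2))
          * ∑ k ∈ Finset.range N, psiCoeff q (n + 2) (k + 1) * Psi q (n - 2 * k) x
        - (1 - q ^ (n + 2)) * (1 - q ^ (n + 1)) * psiSum q n x := by
    rw [psiSum, Finset.mul_sum, Finset.mul_sum, ← Finset.sum_sub_distrib, ← Finset.sum_add_distrib,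
      ← Finset.sum_sub_distrib]
    refine Finset.sum_congr rfl fun k hk => ?_
    rw [psiCoeff_add_four_add_two hq (hE _) (by have := Finset.mem_range.1 hk; omega)]
    ring
  linear_combination hT - hY - (q ^ (n + 3) + q ^ (n + 2)) * hS + hSum
    + Psi q (n + 2) x * psiCoeff_add_four_one hq hq2 n

theorem qHermite_eq_psiSum {q : ℝ} (hq : q ≠ 0) (hE : ∀ k, qPoch (q ^ 2) (q ^ 2) k ≠ 0) (x : ℝ) :
    ∀ n, qHermite q n x = psiSum q n x
  | 0 => by simp [psiSum, qHermite, Psi, psiCoeff_zero]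
  | 1 => by simp [psiSum, qHermite, Psi, psiCoeff_zero]
  | 2 => by
    have hq2 : 1 - q ^ 2 ≠ 0 := by simpa [qPoch] using hE 1
    simp [psiSum, Finset.sum_range_succ, psiCoeff_zero, psiCoeff_add_two_one q 0, qHermite, Psi]
    field_simp
    ring
  | 3 => by
    have hq2 : 1 - q ^ 2 ≠ 0 := by simpa [qPoch] using hE 1
    simp [psiSum, Finset.sum_range_succ, psiCoeff_zero, psiCoeff_add_two_one q 1, qHermite, Psi]
    field_simp
    ring
  | n + 4 => by
    rw [qHermite_add_four, psiSum_add_four hq hE, qHermite_eq_psiSum hq hE x (n + 2),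
      qHermite_eq_psiSum hq hE x n]

/-- `H_n(x|q) = Σ_{k=0}^{⌊n/2⌋} (-1)^k (q;q)_n q^{k(2k-n-1)} / ((q²;q²)_k (q;q)_{n-2k}) Ψ_{n-2k}(x)`. -/
theorem qHermite_in_terms_of_Psi (q : ℝ) (hq0 : 0 < q) (hq1 : q < 1) (n : ℕ) (x : ℝ) :
    qHermite q n x =
      ∑ k ∈ Finset.range (n / 2 + 1),
        (-1) ^ k * qPoch q q n * q ^ ((k : ℤ) * (2 * (k : ℤ) - n - 1)) /
            (qPoch (q ^ 2) (q ^ 2) k * qPoch q q (n - 2 * k)) *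
          Psi q (n - 2 * k) x := by
  have hq2 : q ^ 2 < 1 := by nlinarith
  have hE : ∀ k, qPoch (q ^ 2) (q ^ 2) k ≠ 0 := fun k =>
    (qPoch_pos (sq_nonneg q) hq2 (sq_nonneg q) hq2.le k).ne'
  rw [qHermite_eq_psiSum hq0.ne' hE, psiSum]
  refine Finset.sum_congr rfl fun k hk => ?_
  rw [psiCoeff_eq hq0.ne' (by have := Finset.mem_range.1 hk; omega)
    (qPoch_pos hq0.le hq1 hq0.le hq1.le _).ne']
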